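/- arXiv:1805.02444 — 2 statements merged into one kernel-verified Lean document; each statement's English description precedes it below -/
import Mathlib

section
/- If L ⊆ 2* is a Parikh-injective language, S ⊆ (2×Σ)* is an L-controlled language, T is the set of all L-controlled words over 2×Σ, and U ⊆ T is any language whose induced relation ⟦U⟧ uniformizes ⟦S⟧, then U ⊆ S (i.e., every T-controlled uniformization of S is a subset uniformization of S). -/
def projI {A : Type*} (w : List (Bool × A)) : List A :=
  (w.filter (fun p => p.1)).map Prod.snd

def projO {A : Type*} (w : List (Bool × A)) : List A :=
  (w.filter (fun p => !p.1)).map Prod.snd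

/-- `⟦w⟧ = (π_i w, π_o w)`. -/
def sem {A : Type*} (w : List (Bool × A)) : List A × List A := (projI w, projO w)

/-- `⟦S⟧ = {⟦w⟧ : w ∈ S}`. -/
def semS {A : Type*} (S : Set (List (Bool × A))) : Set (List A × List A) := sem '' S

/-- A word over `2 × Σ` is `L`-controlled if its word of first components is in `L`. -/
def Controlled {A : Type*} (L : Set (List Bool)) (w : List (Bool × A)) : Prop :=
  w.map Prod.fst ∈ L

/-- `L` is Parikh-injective: no two distinct words of `L` have the same
number of `1`s and the same number of `2`s. -/
def ParikhInjective (L : Set (List Bool)) : Prop :=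
  ∀ u ∈ L, ∀ v ∈ L, u.count true = v.count true → u.count false = v.count false → u = v

def dom {A : Type*} (R : Set (List A × List A)) : Set (List A) := Prod.fst '' R

/-- `Rf ⊆_u R`: `Rf` is a uniformization of `R`. -/
def Uniformizes {A : Type*} (Rf R : Set (List A × List A)) : Prop :=
  Rf ⊆ R ∧ dom Rf = dom R ∧ ∀ u v v', (u, v) ∈ Rf → (u, v') ∈ Rf → v = v'


lemma count_true_eq_len_projI {A : Type*} (w : List (Bool × A)) :
    (w.map Prod.fst).count true = (projI w).length := by
  induction w with
  | nil => rfl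
  | cons p t ih =>
    obtain ⟨b, a⟩ := p
    cases b <;> simp [projI, List.count_cons, ih]

lemma count_false_eq_len_projO {A : Type*} (w : List (Bool × A)) :
    (w.map Prod.fst).count false = (projO w).length := by
  induction w with
  | nil => rfl
  | cons p t ih =>
    obtain ⟨b, a⟩ := p
    cases b <;> simp [projO, List.count_cons, ih]

lemma recon {A : Type*} : ∀ (w w' : List (Bool × A)),
    w.map Prod.fst = w'.map Prod.fst → projI w = projI w' → projO w = projO w' → w = w'
  | [], [], _, _, _ => rfl
  | [], (p :: t), h, _, _ => by simp at h
  | (p :: t), [], h, _, _ => by simp at h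
  | (⟨b, a⟩ :: t), (⟨b', a'⟩ :: t'), h, hI, hO => by
    simp only [List.map_cons, List.cons.injEq] at h
    obtain ⟨hb, ht⟩ := h
    subst hb
    cases b
    · simp only [projO, List.filter_cons, Bool.not_false, List.map_cons,
        List.cons.injEq, if_pos] at hO
      simp only [projI, List.filter_cons, if_neg] at hI
      have := recon t t' ht (by simpa [projI] using hI) hO.2
      simp [hO.1, this]
    · simp only [projI, List.filter_cons, List.map_cons, List.cons.injEq, if_pos] at hI
      have := recon t t' ht hI.2 (by simpa [projO] using hO)
      simp [hI.1, this]

/-- If `L` is Parikh-injective, `S` is `L`-controlled, `T` is the set of all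
`L`-controlled words, and `U ⊆ T` with `⟦U⟧` uniformizing `⟦S⟧`, then `U ⊆ S`. -/
theorem T_controlled_uniformization_is_subset {A : Type*}
    (L : Set (List Bool)) (hL : ParikhInjective L)
    (S : Set (List (Bool × A))) (hS : ∀ w ∈ S, Controlled L w)
    (T : Set (List (Bool × A))) (hT : T = {w | Controlled L w})
    (U : Set (List (Bool × A))) (hU : U ⊆ T)
    (hunif : Uniformizes (semS U) (semS S)) :
    U ⊆ S := by
  intro w hw
  have hsemU : sem w ∈ semS U := ⟨w, hw, rfl⟩
  obtain ⟨w', hw'S, hsem⟩ := hunif.1 hsemU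
  have hIw : projI w' = projI w := congrArg Prod.fst hsem
  have hOw : projO w' = projO w := congrArg Prod.snd hsem
  have hwL : w.map Prod.fst ∈ L := by
    have := hU hw; rw [hT] at this; exact this
  have hw'L : w'.map Prod.fst ∈ L := hS w' hw'S
  have hctl : w'.map Prod.fst = w.map Prod.fst := by
    apply hL _ hw'L _ hwL
    · rw [count_true_eq_len_projI, count_true_eq_len_projI, hIw]
    · rw [count_false_eq_len_projO, count_false_eq_len_projO, hOw]
  have : w' = w := recon w' w hctl hIw hOw
  exact this ▸ hw'S
end

section
/- Let L ⊆ 2* be recognized by an NFA with state set Q and suppose shiftlag(L) < m. Then L ⊆ L_{≤ν} · (1* + 2*)^m, where ν = 2(m(|Q|+1)+1) and L_{≤ν} = {u ∈ 2* : lag(u) ≤ ν}. That is, every word of L factors as a prefix in which every position is at most ν-lagged, followed by at most m constant blocks. -/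
def imb (u : List Bool) : ℤ := (u.count true : ℤ) - (u.count false : ℤ)

def lag (u : List Bool) : ℕ :=
  (Finset.range (u.length + 1)).sup (fun i => (imb (u.take i)).natAbs)

/-- Position `i` (0-indexed) is a shift of `u` if `u[i] ≠ u[i+1]`. -/
def IsShift (u : List Bool) (i : ℕ) : Prop :=
  i + 1 < u.length ∧ u[i]? ≠ u[i + 1]?

/-- The lag of position `i` of `u`: absolute imbalance of the prefix up to `i`. -/
def lagAt (u : List Bool) (i : ℕ) : ℕ := (imb (u.take (i + 1))).natAbs

/-- `u` contains `n` consecutive shifts (no other shift strictly between two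
successive ones), each of which is `≥n`-lagged. -/
def HasShiftLag (u : List Bool) (n : ℕ) : Prop :=
  ∃ l : List ℕ, l.length = n ∧
    l.Chain' (fun i j => i < j ∧ ∀ k, i < k → k < j → ¬ IsShift u k) ∧
    (∀ i ∈ l, IsShift u i) ∧ (∀ i ∈ l, n ≤ lagAt u i)

/-!
Split a word of `L` into its maximal runs. Its shifts are exactly the run boundaries, and since the
imbalance is monotone inside a run, the lag of a concatenation of whole runs is attained at a run
boundary. Suppose a boundary has lag at least `m (|Q| + 1)` and is followed by `m` more runs.
Pumping down inside the automaton shortens each of these runs to at most `|Q|` letters without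
leaving `L` or changing the run structure. The imbalance at each of the `m` boundaries from that one
on then differs from the first one's by less than `m |Q|`, so they are `m` consecutive shifts that
are at least `m`-lagged, contradicting `shiftlag(L) < m`. Hence all runs but the last `m` form a
prefix of lag at most `m (|Q| + 1)`.
-/

namespace List

variable {α : Type*}

def ofRuns (rs : List (α × ℕ)) : List α := (rs.map fun r => replicate r.2 r.1).flatten

@[simp] theorem ofRuns_nil : ofRuns ([] : List (α × ℕ)) = [] := rfl

@[simp] theorem ofRuns_cons (r : α × ℕ) (rs : List (α × ℕ)) :
    ofRuns (r :: rs) = replicate r.2 r.1 ++ ofRuns rs := rfl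

@[simp] theorem ofRuns_append (rs rs' : List (α × ℕ)) :
    ofRuns (rs ++ rs') = ofRuns rs ++ ofRuns rs' := by
  simp [ofRuns]

theorem length_ofRuns_le {c : ℕ} {rs : List (α × ℕ)} (h : ∀ r ∈ rs, r.2 ≤ c) :
    (ofRuns rs).length ≤ rs.length * c := by
  induction rs with
  | nil => simp
  | cons r rs ih =>
    simp only [ofRuns_cons, length_append, length_replicate, length_cons]
    have := h r mem_cons_self
    have := ih fun r' hr' => h r' (mem_cons_of_mem r hr')
    nlinarith

theorem exists_ofRuns_eq [DecidableEq α] (u : List α) :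
    ∃ rs : List (α × ℕ), ofRuns rs = u ∧ (∀ r ∈ rs, 0 < r.2) ∧
      (rs.map Prod.fst).IsChain (· ≠ ·) := by
  induction u with
  | nil => exact ⟨[], rfl, by simp, .nil⟩
  | cons a u ih =>
    obtain ⟨rs, rfl, hpos, hchain⟩ := ih
    match rs, hpos, hchain with
    | [], _, _ => exact ⟨[(a, 1)], rfl, by simp, .singleton _⟩
    | (b, n) :: rs, hpos, hchain =>
      by_cases hab : a = b
      · subst hab
        refine ⟨(a, n + 1) :: rs, by simp [replicate_succ], ?_, hchain⟩
        simp only [mem_cons, forall_eq_or_imp] at hpos ⊢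
        exact ⟨n.succ_pos, hpos.2⟩
      · refine ⟨(a, 1) :: (b, n) :: rs, rfl, ?_, .cons_cons hab hchain⟩
        simpa using hpos

theorem getElem?_append_replicate_append {x y : List α} {b : α} {n k : ℕ}
    (hk : x.length ≤ k) (hkn : k < x.length + n) : (x ++ replicate n b ++ y)[k]? = some b := by
  rw [append_assoc, getElem?_append_right hk, getElem?_append_left (by simp; omega),
    getElem?_replicate_of_lt (by omega)]

end List

namespace NFA

variable {α σ : Type*} {M : NFA α σ}

theorem mem_evalFrom_singleton_append {s t : σ} {x y : List α} :
    t ∈ M.evalFrom {s} (x ++ y) ↔ ∃ r ∈ M.evalFrom {s} x, t ∈ M.evalFrom {r} y := by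
  rw [evalFrom_append, mem_evalFrom_iff_exists]

variable [Fintype σ]

theorem exists_pos_le_card_mem_evalFrom_replicate {s t : σ} {a : α} {n : ℕ}
    (h : t ∈ M.evalFrom {s} (List.replicate n a)) (hn : 0 < n) :
    ∃ n', 0 < n' ∧ n' ≤ Fintype.card σ ∧ t ∈ M.evalFrom {s} (List.replicate n' a) := by
  induction n using Nat.strong_induction_on with
  | _ n ih =>
    by_cases hle : n ≤ Fintype.card σ
    · exact ⟨n, hn, hle, h⟩
    have hsplit (i : Fin (Fintype.card σ + 1)) : ∃ r ∈ M.evalFrom {s} (List.replicate i a),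
        t ∈ M.evalFrom {r} (List.replicate (n - i) a) := by
      rw [← mem_evalFrom_singleton_append, ← List.replicate_add, Nat.add_sub_cancel' (by omega)]
      exact h
    -- `f i` is visited after `i` letters; two of the first `|σ| + 1` coincide and the loop between
    -- them can be cut out
    choose f hf using hsplit
    have cut (i j : Fin (Fintype.card σ + 1)) (hij : i < j) (hfij : f i = f j) := by
      refine ih (i + (n - j)) (by omega) ?_ (by omega)
      rw [List.replicate_add, mem_evalFrom_singleton_append]
      exact ⟨f i, (hf i).1, hfij ▸ (hf j).2⟩
    obtain ⟨i, j, hij, hfij⟩ := Fintype.exists_ne_map_eq_of_card_lt f (by simp)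
    rcases lt_or_gt_of_ne hij with hlt | hlt
    exacts [cut i j hlt hfij, cut j i hlt hfij.symm]

theorem exists_pos_le_card_append_replicate_append_mem_accepts {x z : List α} {a : α} {n : ℕ}
    (hu : x ++ List.replicate n a ++ z ∈ M.accepts) (hn : 0 < n) :
    ∃ n', 0 < n' ∧ n' ≤ Fintype.card σ ∧ x ++ List.replicate n' a ++ z ∈ M.accepts := by
  simp only [mem_accepts, evalFrom_append] at hu ⊢
  obtain ⟨f, hf, hfz⟩ := hu
  obtain ⟨t, ht, hfz⟩ := mem_evalFrom_iff_exists.1 hfz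
  obtain ⟨s, hs, ht⟩ := mem_evalFrom_iff_exists.1 ht
  obtain ⟨n', hn', hle, ht'⟩ := exists_pos_le_card_mem_evalFrom_replicate ht hn
  exact ⟨n', hn', hle, f, hf,
    mem_evalFrom_iff_exists.2 ⟨t, mem_evalFrom_iff_exists.2 ⟨s, hs, ht'⟩, hfz⟩⟩

theorem exists_ofRuns_mem_accepts_le_card {x z : List α} {rs : List (α × ℕ)}
    (hpos : ∀ r ∈ rs, 0 < r.2) (hu : x ++ rs.ofRuns ++ z ∈ M.accepts) :
    ∃ rs' : List (α × ℕ), rs'.map Prod.fst = rs.map Prod.fst ∧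
      (∀ r ∈ rs', 0 < r.2 ∧ r.2 ≤ Fintype.card σ) ∧ x ++ rs'.ofRuns ++ z ∈ M.accepts := by
  induction rs generalizing x with
  | nil => exact ⟨[], rfl, by simp, hu⟩
  | cons r rs ih =>
    simp only [List.ofRuns_cons, List.append_assoc] at hu
    rw [← List.append_assoc] at hu
    obtain ⟨n', hn', hle, hu⟩ :=
      exists_pos_le_card_append_replicate_append_mem_accepts hu (hpos r List.mem_cons_self)
    rw [← List.append_assoc] at hu
    obtain ⟨rs', hfst, hshort, hu⟩ :=
      ih (fun r' hr' => hpos r' (List.mem_cons_of_mem r hr')) hu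
    refine ⟨(r.1, n') :: rs', by simp [hfst], ?_, by simpa [List.append_assoc] using hu⟩
    simpa [hn', hle] using hshort

end NFA

open List

@[simp] theorem imb_nil : imb [] = 0 := rfl

@[simp] theorem imb_append (u v : List Bool) : imb (u ++ v) = imb u + imb v := by
  simp only [imb, count_append]
  push_cast
  ring

theorem imb_replicate (n : ℕ) (b : Bool) : imb (replicate n b) = n * imb [b] := by
  cases b <;> simp [imb, count_replicate]

theorem natAbs_imb_le_length (u : List Bool) : (imb u).natAbs ≤ u.length := by
  have := count_true_add_count_false u
  simp only [imb]
  omega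

theorem lag_le_iff {u : List Bool} {N : ℕ} :
    lag u ≤ N ↔ ∀ i ≤ u.length, (imb (u.take i)).natAbs ≤ N := by
  simp [lag, Finset.sup_le_iff]

theorem imb_singleton_eq_one_or_neg_one (b : Bool) : imb [b] = 1 ∨ imb [b] = -1 := by
  cases b <;> simp [imb]

theorem lag_append_replicate_le (x : List Bool) (n : ℕ) (b : Bool) :
    lag (x ++ replicate n b) ≤ max (lag x) (imb (x ++ replicate n b)).natAbs := by
  have hx := lag_le_iff.1 (le_refl (lag x))
  rw [lag_le_iff]
  intro i hi
  rcases le_or_gt i x.length with h | h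
  · rw [take_append_of_le_length h]
    exact le_max_of_le_left (hx i h)
  · have hx' := hx x.length le_rfl
    rw [take_length] at hx'
    rw [take_append, take_of_length_le h.le, take_replicate]
    simp only [length_append, length_replicate] at hi
    simp only [imb_append, imb_replicate]
    rcases imb_singleton_eq_one_or_neg_one b with hb | hb <;> rw [hb] <;> omega

theorem lag_ofRuns_le {rs : List (Bool × ℕ)} {N : ℕ}
    (h : ∀ pre, pre <+: rs → pre ≠ [] → (imb pre.ofRuns).natAbs ≤ N) : lag rs.ofRuns ≤ N := by
  induction rs using reverseRecOn with
  | nil => simp [lag]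
  | append_singleton rs r ih =>
    have hlast := h (rs ++ [r]) prefix_rfl (by simp)
    simp only [ofRuns_append, ofRuns_cons, ofRuns_nil, append_nil] at hlast ⊢
    exact (lag_append_replicate_le _ _ _).trans
      (max_le (ih fun pre hpre => h pre (hpre.trans (prefix_append _ _))) hlast)

theorem isShift_append_replicate_append {x y : List Bool} {a b : Bool} {n : ℕ}
    (hx : x.getLast? = some a) (hab : a ≠ b) (hn : 0 < n) :
    IsShift (x ++ replicate n b ++ y) (x.length - 1) := by
  have hx0 : 0 < x.length := length_pos_iff.2 (by rintro rfl; simp at hx)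
  refine ⟨by simp; omega, ?_⟩
  rw [Nat.sub_add_cancel hx0, getElem?_append_replicate_append le_rfl (by omega), append_assoc,
    getElem?_append_left (by omega), ← getLast?_eq_getElem?, hx]
  simpa using hab

theorem not_isShift_append_replicate_append {x y : List Bool} {b : Bool} {n k : ℕ}
    (hk : x.length ≤ k) (hkn : k + 1 < x.length + n) :
    ¬IsShift (x ++ replicate n b ++ y) k := fun h =>
  h.2 (by rw [getElem?_append_replicate_append hk (by omega),
    getElem?_append_replicate_append (by omega) hkn])

theorem lagAt_append_length_sub_one {x y : List Bool} (hx : x ≠ []) :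
    lagAt (x ++ y) (x.length - 1) = (imb x).natAbs := by
  rw [lagAt, Nat.sub_add_cancel (length_pos_iff.2 hx), take_left]

/-- The position of the first shift is recorded so that the induction can link it to the shift
before it. -/
theorem exists_shift_chain_append_ofRuns_append {x z : List Bool} {a : Bool}
    {rs : List (Bool × ℕ)} {n : ℕ}
    (hx : x.getLast? = some a) (hpos : ∀ r ∈ rs, 0 < r.2)
    (hchain : (a :: rs.map Prod.fst).IsChain (· ≠ ·))
    (hlag : ∀ j < rs.length, n ≤ (imb (x ++ (rs.take j).ofRuns)).natAbs) :
    ∃ l : List ℕ, l.length = rs.length ∧ (∀ i ∈ l.head?, i = x.length - 1) ∧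
      l.IsChain (fun i j => i < j ∧ ∀ k, i < k → k < j → ¬IsShift (x ++ rs.ofRuns ++ z) k) ∧
      (∀ i ∈ l, IsShift (x ++ rs.ofRuns ++ z) i) ∧ ∀ i ∈ l, n ≤ lagAt (x ++ rs.ofRuns ++ z) i := by
  induction rs generalizing x a with
  | nil => exact ⟨[], rfl, by simp, .nil, by simp, by simp⟩
  | cons r rs ih =>
    obtain ⟨b, k⟩ := r
    have hab : a ≠ b := (isChain_cons_cons.1 hchain).1
    have hk : 0 < k := hpos _ mem_cons_self
    have hx0 : x ≠ [] := by rintro rfl; simp at hx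
    have hword : x ++ ofRuns ((b, k) :: rs) ++ z = x ++ replicate k b ++ (rs.ofRuns ++ z) := by
      simp
    have hword' : x ++ ofRuns ((b, k) :: rs) ++ z = x ++ replicate k b ++ rs.ofRuns ++ z := by
      simp
    obtain ⟨l, hlen, hhead, hl, hshift, hlagl⟩ := ih (x := x ++ replicate k b) (a := b)
      (by simp [getLast?_append, getLast?_replicate, hk.ne'])
      (fun r hr => hpos r (mem_cons_of_mem _ hr)) (isChain_cons_cons.1 hchain).2
      (fun j hj => by simpa using hlag (j + 1) (by simpa using hj))
    rw [← hword'] at hl hshift hlagl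
    refine ⟨(x.length - 1) :: l, by simp [hlen], by simp, ?_, ?_, ?_⟩
    · refine isChain_cons.2 ⟨fun i hi => ?_, hl⟩
      rw [hhead i hi, length_append, length_replicate]
      have := length_pos_iff.2 hx0
      refine ⟨by omega, fun j h1 h2 => ?_⟩
      rw [hword]
      exact not_isShift_append_replicate_append (by omega) (by omega)
    · simp only [mem_cons, forall_eq_or_imp]
      refine ⟨?_, hshift⟩
      rw [hword]
      exact isShift_append_replicate_append hx hab hk
    · simp only [mem_cons, forall_eq_or_imp]
      refine ⟨?_, hlagl⟩
      rw [hword, append_assoc, lagAt_append_length_sub_one hx0]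
      simpa using hlag 0 (by simp)

theorem hasShiftLag_append_ofRuns_append {x z : List Bool} {a : Bool} {rs : List (Bool × ℕ)}
    (hx : x.getLast? = some a) (hpos : ∀ r ∈ rs, 0 < r.2)
    (hchain : (a :: rs.map Prod.fst).IsChain (· ≠ ·))
    (hlag : ∀ j < rs.length, rs.length ≤ (imb (x ++ (rs.take j).ofRuns)).natAbs) :
    HasShiftLag (x ++ rs.ofRuns ++ z) rs.length :=
  have ⟨l, hlen, _, hl, hshift, hlagl⟩ :=
    exists_shift_chain_append_ofRuns_append (z := z) hx hpos hchain hlag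
  ⟨l, hlen, hl, hshift, hlagl⟩

section Automaton

variable {Q : Type*} [Fintype Q] {M : NFA Bool Q} {m : ℕ}

theorem natAbs_imb_lt_of_not_hasShiftLag (hsl : ∀ u ∈ M.accepts, ¬HasShiftLag u m)
    {x z : List Bool} {a : Bool} {W : List (Bool × ℕ)} (hx : x.getLast? = some a)
    (hpos : ∀ r ∈ W, 0 < r.2) (hchain : (a :: W.map Prod.fst).IsChain (· ≠ ·))
    (hW : W.length = m) (hu : x ++ W.ofRuns ++ z ∈ M.accepts) :
    (imb x).natAbs < m * (Fintype.card Q + 1) := by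
  by_contra! hbig
  obtain ⟨W', hfst, hshort, hu'⟩ := M.exists_ofRuns_mem_accepts_le_card hpos hu
  have hlen : W'.length = m := by rw [← length_map (f := Prod.fst), hfst, length_map, hW]
  refine hsl _ hu' (hlen ▸ hasShiftLag_append_ofRuns_append hx (fun r hr => (hshort r hr).1)
    (hfst ▸ hchain) fun j hj => ?_)
  have htake : (W'.take j).ofRuns.length ≤ j * Fintype.card Q :=
    (length_ofRuns_le fun r hr => (hshort r (mem_of_mem_take hr)).2).trans
      (Nat.mul_le_mul_right _ (length_take_le _ _))
  have hj : j * Fintype.card Q + Fintype.card Q ≤ m * Fintype.card Q := by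
    rw [← Nat.succ_mul]; exact Nat.mul_le_mul_right _ (hlen ▸ hj)
  have := natAbs_imb_le_length (W'.take j).ofRuns
  rw [imb_append, hlen]
  rw [Nat.mul_succ] at hbig
  omega

theorem natAbs_imb_ofRuns_le_of_not_hasShiftLag (hsl : ∀ u ∈ M.accepts, ¬HasShiftLag u m)
    {rs pre : List (Bool × ℕ)} (hpos : ∀ r ∈ rs, 0 < r.2)
    (hchain : (rs.map Prod.fst).IsChain (· ≠ ·)) (hu : rs.ofRuns ∈ M.accepts)
    (hpre : pre <+: rs) (hlen : pre.length + m ≤ rs.length) :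
    (imb pre.ofRuns).natAbs ≤ m * (Fintype.card Q + 1) := by
  obtain ⟨rest, rfl⟩ := hpre
  rcases eq_nil_or_concat pre with rfl | ⟨A, r, rfl⟩
  · simp
  have hr : 0 < r.2 := hpos r (by simp)
  refine (natAbs_imb_lt_of_not_hasShiftLag hsl (a := r.1) (W := rest.take m)
    (z := (rest.drop m).ofRuns) ?_ ?_ ?_ ?_ ?_).le
  · simp [getLast?_append, getLast?_replicate, hr.ne']
  · exact fun r' hr' => hpos r' (by simp [mem_of_mem_take hr'])
  · refine hchain.infix ⟨A.map Prod.fst, (rest.drop m).map Prod.fst, ?_⟩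
    conv_rhs => rw [← take_append_drop m rest]
    simp
  · rw [length_append] at hlen
    rw [length_take]
    omega
  · rwa [append_assoc, ← ofRuns_append, take_append_drop, ← ofRuns_append]

end Automaton

/-- If `L` is recognized by an NFA with state set `Q` and `shiftlag(L) < m`, then
every word of `L` factors as a prefix of lag at most `ν = 2(m(|Q|+1)+1)` followed
by at most `m` constant blocks, i.e. `L ⊆ L_{≤ν} · (1* + 2*)^m`. -/
theorem shiftlag_form (Q : Type*) [Fintype Q] (M : NFA Bool Q) (m : ℕ)
    (hsl : ∀ u ∈ M.accepts, ¬ HasShiftLag u m) :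
    ∀ u ∈ M.accepts, ∃ (p : List Bool) (blocks : List (List Bool)),
      u = p ++ blocks.flatten ∧
      lag p ≤ 2 * (m * (Fintype.card Q + 1) + 1) ∧
      blocks.length = m ∧
      ∀ b ∈ blocks, (∀ x ∈ b, x = true) ∨ (∀ x ∈ b, x = false) := by
  intro u hu
  obtain ⟨rs, rfl, hpos, hchain⟩ := exists_ofRuns_eq u
  set k := rs.length - m
  refine ⟨(rs.take k).ofRuns,
    (rs.drop k).map (fun r => replicate r.2 r.1) ++ replicate (m - rs.length) [], ?_, ?_, ?_, ?_⟩
  · conv_lhs => rw [← take_append_drop k rs, ofRuns_append]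
    simp [ofRuns]
  · refine (lag_ofRuns_le fun pre hpre hne => natAbs_imb_ofRuns_le_of_not_hasShiftLag hsl hpos
      hchain hu (hpre.trans (take_prefix _ _)) ?_).trans (by omega)
    have hle := hpre.length_le
    have hpre_pos := length_pos_iff.2 hne
    rw [length_take] at hle
    omega
  · simp only [length_append, length_map, length_drop, length_replicate]
    omega
  · simp only [mem_append, mem_map, mem_replicate]
    rintro b (⟨⟨c, n⟩, -, rfl⟩ | ⟨-, rfl⟩)
    · cases c <;> simp [mem_replicate]
    · simp
end
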